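/- Let S = R[x_1,...,x_r] be a graded polynomial ring over a Noetherian local ring R, acting on an ℕ-graded S-module T = ⊕_{i≥0} T_i with each x_j homogeneous of the same positive degree d. If T is a Noetherian S-module, then the sequence of annihilator ideals {ann_R(T_i)} is eventually periodic of period dividing d: there exists n_0 such that ann_R(T_i) = ann_R(T_{i+d}) for all i ≥ n_0. -/

import Mathlib

/-!
Since `T` is Noetherian over `S`, it is generated by its pieces of degree `< N` for some `N`.
For `m ≥ N`, if `a ∈ R` kills `T_m` then `a` kills the degree-`(m + d)` component of every
`x_j • w` (that component is `x_j • w_m`), and the `R`-submodule of such `w` is therefore stable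
under `S`; it contains the generators, so it is all of `T`, whence `a` kills `T_{m+d}`. Thus along
each residue class mod `d` the annihilators eventually form an ascending chain of ideals of the
Noetherian ring `R`, which stabilizes.
-/

open MvPolynomial DirectSum Filter

theorem exists_forall_ge_eq_add_of_le_add {α : Type*} [PartialOrder α] [WellFoundedGT α]
    {f : ℕ → α} {d N : ℕ} (h : ∀ m, N ≤ m → f m ≤ f (m + d)) :
    ∃ n₀, ∀ i, n₀ ≤ i → f i = f (i + d) := by
  rcases Nat.eq_zero_or_pos d with rfl | hd
  · exact ⟨0, fun i _ => rfl⟩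
  have residue_stable (s : Fin d) :
      ∀ᶠ n in atTop, f (N + s + d * n) = f (N + s + d * (n + 1)) := by
    have hmono : Monotone fun n => f (N + s + d * n) :=
      monotone_nat_of_le_succ fun n => by
        simpa only [mul_add, mul_one, add_assoc] using h (N + s + d * n) (by omega)
    obtain ⟨k, hk⟩ := WellFoundedGT.monotone_chain_condition ⟨_, hmono⟩
    filter_upwards [eventually_ge_atTop k] with n hn
    exact (hk n hn).symm.trans (hk (n + 1) (by omega))
  obtain ⟨k, hk⟩ := eventually_atTop.mp (eventually_all.mpr residue_stable)
  refine ⟨N + d * k, fun i hi => ?_⟩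
  obtain ⟨n, s, hs, rfl⟩ : ∃ n s, s < d ∧ i = N + s + d * n :=
    ⟨(i - N) / d, (i - N) % d, Nat.mod_lt _ hd, by have := Nat.div_add_mod (i - N) d; omega⟩
  have hkn : k ≤ n := by
    have : d * k < d * (n + 1) := by rw [mul_add, mul_one]; omega
    exact Nat.lt_succ_iff.mp (Nat.lt_of_mul_lt_mul_left this)
  simpa only [mul_add, mul_one, add_assoc] using hk n hkn ⟨s, hs⟩

theorem Submodule.exists_span_biUnion_lt_eq_top {S M : Type*} [Semiring S] [AddCommMonoid M]
    [Module S M] [IsNoetherian S M] {s : ℕ → Set M} (hs : span S (⋃ i, s i) = ⊤) :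
    ∃ N, span S (⋃ i < N, s i) = ⊤ := by
  let a : ℕ →o Submodule S M :=
    ⟨fun n => span S (⋃ i < n, s i), fun m n hmn =>
      span_mono (Set.biUnion_subset_biUnion_left fun i hi => lt_of_lt_of_le hi hmn)⟩
  refine ⟨monotonicSequenceLimitIndex a, ?_⟩
  rw [eq_top_iff, ← hs, span_le]
  refine Set.iUnion_subset fun i => ?_
  have hi : s i ⊆ a (i + 1) := subset_span.trans' (Set.subset_biUnion_of_mem (Nat.lt_succ_self i))
  exact hi.trans (SetLike.coe_subset_coe.mpr (le_monotonicSequenceLimit a (i + 1)))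

section PolynomialAction

variable {σ R M : Type*} [CommSemiring R] [AddCommMonoid M] [Module (MvPolynomial σ R) M]
  [Module R M] [IsScalarTower R (MvPolynomial σ R) M]

theorem MvPolynomial.smul_mem_of_forall_X_smul_mem (N : Submodule R M)
    (hN : ∀ j, ∀ w ∈ N, (X j : MvPolynomial σ R) • w ∈ N) (p : MvPolynomial σ R) :
    ∀ w ∈ N, p • w ∈ N := by
  induction p using MvPolynomial.induction_on with
  | C c => exact fun w hw => (algebraMap_smul (MvPolynomial σ R) c w).symm ▸ N.smul_mem c hw
  | add p q hp hq => exact fun w hw => (add_smul p q w).symm ▸ N.add_mem (hp w hw) (hq w hw)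
  | mul_X p j hp => exact fun w hw => (mul_smul p (X j) w).symm ▸ hp _ (hN j w hw)

theorem MvPolynomial.span_subset_of_forall_X_smul_mem (N : Submodule R M)
    (hN : ∀ j, ∀ w ∈ N, (X j : MvPolynomial σ R) • w ∈ N) {s : Set M} (hs : s ⊆ N) :
    (Submodule.span (MvPolynomial σ R) s : Set M) ⊆ N :=
  Submodule.span_le (p := { N.toAddSubmonoid with
    smul_mem' := fun p w hw => smul_mem_of_forall_X_smul_mem N hN p w hw }) |>.mpr hs

end PolynomialAction

section GradedModule

variable {σ R T : Type*} [CommSemiring R] [AddCommMonoid T] [Module (MvPolynomial σ R) T]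
  [Module R T] {𝒯 : ℕ → Submodule R T} [Decomposition 𝒯] {d : ℕ}

theorem DirectSum.span_iUnion_eq_top (S : Type*) [Semiring S] [Module S T] :
    Submodule.span S (⋃ i, (𝒯 i : Set T)) = ⊤ := by
  refine Submodule.eq_top_iff'.mpr fun v => Decomposition.inductionOn 𝒯 (Submodule.zero_mem _)
    (fun {i} v => Submodule.subset_span (Set.mem_iUnion_of_mem i v.2))
    (fun _ _ => Submodule.add_mem _) v

theorem decompose_X_smul_apply_add
    (hx : ∀ j i, ∀ v ∈ 𝒯 i, (X j : MvPolynomial σ R) • v ∈ 𝒯 (i + d)) (j : σ) (m : ℕ) (v : T) :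
    (decompose 𝒯 ((X j : MvPolynomial σ R) • v) (m + d) : T) =
      (X j : MvPolynomial σ R) • (decompose 𝒯 v m : T) := by
  induction v using Decomposition.inductionOn 𝒯 with
  | zero => simp
  | @homogeneous i v =>
    obtain ⟨v, hv⟩ := v
    rcases eq_or_ne i m with rfl | him
    · rw [decompose_of_mem_same 𝒯 (hx j i v hv), decompose_of_mem_same 𝒯 hv]
    · rw [decompose_of_mem_ne 𝒯 (hx j i v hv) (by omega), decompose_of_mem_ne 𝒯 hv him, smul_zero]
  | add v w hv hw =>
    simp only [smul_add, decompose_add, DirectSum.add_apply, Submodule.coe_add, hv, hw]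

theorem annihilator_le_annihilator_add_of_span_eq_top [IsScalarTower R (MvPolynomial σ R) T]
    (hx : ∀ j i, ∀ v ∈ 𝒯 i, (X j : MvPolynomial σ R) • v ∈ 𝒯 (i + d)) {N : ℕ}
    (hN : Submodule.span (MvPolynomial σ R) (⋃ i < N, (𝒯 i : Set T)) = ⊤) {m : ℕ} (hm : N ≤ m) :
    Module.annihilator R (𝒯 m) ≤ Module.annihilator R (𝒯 (m + d)) := by
  intro a ha
  replace ha : ∀ v ∈ 𝒯 m, a • v = 0 := Submodule.mem_annihilator.mp ha
  let K : Submodule R T :=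
    { carrier := {w | a • (decompose 𝒯 w (m + d) : T) = 0}
      add_mem' := fun {v w} (hv : a • _ = 0) (hw : a • _ = 0) =>
        show a • (decompose 𝒯 (v + w) (m + d) : T) = 0 by
          rw [decompose_add, DirectSum.add_apply, Submodule.coe_add, smul_add, hv, hw, add_zero]
      zero_mem' := by simp
      smul_mem' := fun c w (hw : a • _ = 0) =>
        show a • (decompose 𝒯 (c • w) (m + d) : T) = 0 by
          rw [decompose_smul, DirectSum.smul_apply, Submodule.coe_smul, smul_comm, hw, smul_zero] }
  have hXK : ∀ j, ∀ w ∈ K, (X j : MvPolynomial σ R) • w ∈ K := fun j w _ => by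
    change a • _ = 0
    rw [decompose_X_smul_apply_add hx, smul_comm, ha _ (decompose 𝒯 w m).2, smul_zero]
  have hgen : (⋃ i < N, (𝒯 i : Set T)) ⊆ K := by
    simp only [Set.iUnion_subset_iff]
    intro i hi w hw
    change a • _ = 0
    rw [decompose_of_mem_ne 𝒯 hw (by omega), smul_zero]
  refine Submodule.mem_annihilator.mpr fun v hv => ?_
  have hvK : a • (decompose 𝒯 v (m + d) : T) = 0 :=
    span_subset_of_forall_X_smul_mem K hXK hgen (hN ▸ Submodule.mem_top)
  rwa [decompose_of_mem_same 𝒯 hv] at hvK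

end GradedModule

theorem stmt4_general (R : Type) [CommRing R] [IsNoetherianRing R]
    (r : ℕ) (d : ℕ)
    (T : Type) [AddCommGroup T]
    [Module (MvPolynomial (Fin r) R) T] [Module R T]
    [IsScalarTower R (MvPolynomial (Fin r) R) T]
    (𝒯 : ℕ → Submodule R T)
    (hinternal : DirectSum.IsInternal 𝒯)
    (hx : ∀ (j : Fin r) (i : ℕ), ∀ v ∈ 𝒯 i,
      (X j : MvPolynomial (Fin r) R) • v ∈ 𝒯 (i + d))
    (hNoeth : IsNoetherian (MvPolynomial (Fin r) R) T) :
    ∃ n₀ : ℕ, ∀ i : ℕ, n₀ ≤ i →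
      Module.annihilator R (𝒯 i) = Module.annihilator R (𝒯 (i + d)) := by
  let := hinternal.chooseDecomposition
  obtain ⟨N, hN⟩ := Submodule.exists_span_biUnion_lt_eq_top
    (span_iUnion_eq_top (𝒯 := 𝒯) (MvPolynomial (Fin r) R))
  exact exists_forall_ge_eq_add_of_le_add fun m hm =>
    annihilator_le_annihilator_add_of_span_eq_top hx hN hm

/-- Let `S = R[x_1,…,x_r]` be a polynomial ring over a Noetherian local ring `R`, acting on an
`ℕ`-graded `S`-module `T = ⊕ T_i` with each `x_j` homogeneous of the same positive degree `d`.
If `T` is a Noetherian `S`-module then the annihilators `ann_R(T_i)` are eventually periodic of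
period dividing `d`:  `ann_R(T_i) = ann_R(T_{i+d})` for all large `i`. -/
theorem stmt4 (R : Type) [CommRing R] [IsNoetherianRing R] [IsLocalRing R]
    (r : ℕ) (d : ℕ) (hd : 0 < d)
    (T : Type) [AddCommGroup T]
    [Module (MvPolynomial (Fin r) R) T] [Module R T]
    [IsScalarTower R (MvPolynomial (Fin r) R) T]
    (𝒯 : ℕ → Submodule R T)
    (hinternal : DirectSum.IsInternal 𝒯)
    (hx : ∀ (j : Fin r) (i : ℕ), ∀ v ∈ 𝒯 i,
      (X j : MvPolynomial (Fin r) R) • v ∈ 𝒯 (i + d))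
    (hNoeth : IsNoetherian (MvPolynomial (Fin r) R) T) :
    ∃ n₀ : ℕ, ∀ i : ℕ, n₀ ≤ i →
      Module.annihilator R (𝒯 i) = Module.annihilator R (𝒯 (i + d)) :=
  stmt4_general R r d T 𝒯 hinternal hx hNoeth
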